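/- For the iterated q-wedge of n vectors v¹,…,vⁿ ∈ W_1 = ℂ^ℓ, one has (v¹ ∧_q … ∧_q vⁿ)_i = Σ_{p ∈ S_n} (−q^{−1})^{‖p‖} v¹_{i_{p(1)}} ⋯ vⁿ_{i_{p(n)}} for every strictly increasing n-tuple i, i.e. the iterated product is a q-deformed determinant of the matrix (v^a_{i_b}). -/

import Mathlib

/-- The inversion number `‖p‖` of a permutation of `Fin n`. -/
def invNum (n : ℕ) (p : Equiv.Perm (Fin n)) : ℕ :=
  ((Finset.univ : Finset (Fin n × Fin n)).filter
    (fun x => x.1 < x.2 ∧ p x.2 < p x.1)).card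

/-- The set `S^{(h)}_{h+k}` of minimal coset representatives. -/
def shuffles (h k : ℕ) : Finset (Equiv.Perm (Fin (h + k))) :=
  Finset.univ.filter (fun p =>
    (∀ a b : Fin h, a < b → p (Fin.castAdd k a) < p (Fin.castAdd k b)) ∧
    (∀ a b : Fin k, a < b → p (Fin.natAdd h a) < p (Fin.natAdd h b)))

/-- The q-deformed wedge product. -/
noncomputable def wedgeQ (q : ℝ) (h k : ℕ)
    (v : (Fin h → ℕ) → ℂ) (w : (Fin k → ℕ) → ℂ) : (Fin (h + k) → ℕ) → ℂ :=
  fun i => ∑ p ∈ shuffles h k,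
    ((-q⁻¹ : ℂ) ^ invNum (h + k) p)
      * v (fun a => i (p (Fin.castAdd k a)))
      * w (fun a => i (p (Fin.natAdd h a)))

/-- The iterated (left-associated) q-wedge product of `n` vectors in `W_1`. -/
noncomputable def itWedge (q : ℝ) : (n : ℕ) → (Fin n → ((Fin 1 → ℕ) → ℂ)) →
    ((Fin n → ℕ) → ℂ)
  | 0, _ => fun _ => 1
  | n + 1, v => wedgeQ q n 1 (itWedge q n (fun a => v a.castSucc)) (v (Fin.last n))

/-!
Induct on `n`, expanding the last factor of `v¹ ∧_q ⋯ ∧_q vⁿ⁺¹`. A shuffle in `S^{(n)}_{n+1}` is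
determined by the slot `j` to which it sends the last position (it is `permSnoc j 1`), and it has
`n - j` inversions. Every `σ ∈ S_{n+1}` factors uniquely as `permSnoc j τ` with `τ ∈ S_n`, and then
`‖σ‖ = ‖τ‖ + (n - j)`. Grouping the terms of the q-determinant by `j = σ(last)` therefore reproduces
the expansion of the wedge product: a q-analogue of Laplace expansion along the last row.
-/

open Finset

lemma invNum_one (n : ℕ) : invNum n 1 = 0 :=
  card_eq_zero.2 <| filter_eq_empty_iff.2 fun _ _ h => lt_asymm h.1 h.2

section Permutations

variable {n : ℕ}

def permSnoc (j : Fin (n + 1)) (τ : Equiv.Perm (Fin n)) : Equiv.Perm (Fin (n + 1)) :=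
  finSuccEquivLast.trans ((Equiv.optionCongr τ).trans (finSuccEquiv' j).symm)

@[simp]
lemma permSnoc_castSucc (j : Fin (n + 1)) (τ : Equiv.Perm (Fin n)) (a : Fin n) :
    permSnoc j τ a.castSucc = j.succAbove (τ a) := by
  simp [permSnoc, finSuccEquivLast_castSucc, finSuccEquiv'_symm_some]

@[simp]
lemma permSnoc_last (j : Fin (n + 1)) (τ : Equiv.Perm (Fin n)) :
    permSnoc j τ (Fin.last n) = j := by
  simp [permSnoc, finSuccEquivLast_last, finSuccEquiv'_symm_none]

lemma permSnoc_bijective :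
    Function.Bijective (fun jτ : Fin (n + 1) × Equiv.Perm (Fin n) => permSnoc jτ.1 jτ.2) := by
  refine (Fintype.bijective_iff_injective_and_card _).2 ⟨?_, ?_⟩
  · rintro ⟨j, τ⟩ ⟨j', τ'⟩ h
    have hj : j = j' := by simpa using DFunLike.congr_fun h (Fin.last n)
    subst hj
    refine Prod.ext rfl (Equiv.ext fun a => j.succAbove_right_injective ?_)
    simpa using DFunLike.congr_fun h a.castSucc
  · simp [Fintype.card_perm, Nat.factorial_succ]

lemma sum_perm_succ {M : Type*} [AddCommMonoid M] (f : Equiv.Perm (Fin (n + 1)) → M) :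
    ∑ σ, f σ = ∑ j, ∑ τ, f (permSnoc j τ) := by
  rw [← Fintype.sum_prod_type', Fintype.sum_bijective _ permSnoc_bijective _ _ fun _ => rfl]

lemma card_filter_lt_succAbove (j : Fin (n + 1)) : #{a : Fin n | j < j.succAbove a} = n - j := by
  have h := Fin.sum_univ_succAbove (fun y => if j < y then 1 else 0) j
  simp only [lt_self_iff_false, if_false, zero_add, ← card_filter, filter_lt_eq_Ioi,
    Fin.card_Ioi] at h
  rw [← h]
  simp

lemma invNum_permSnoc (j : Fin (n + 1)) (τ : Equiv.Perm (Fin n)) :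
    invNum (n + 1) (permSnoc j τ) = invNum n τ + (n - j) := by
  have last_not_lt (a : Fin n) : ¬ Fin.last n < a.castSucc := (Fin.castSucc_lt_last a).not_gt
  simp only [invNum, card_filter, Fintype.sum_prod_type, Fin.sum_univ_castSucc,
    permSnoc_castSucc, permSnoc_last, Fin.castSucc_lt_castSucc_iff, Fin.succAbove_lt_succAbove_iff,
    Fin.castSucc_lt_last, last_not_lt, true_and, lt_self_iff_false, false_and, if_false,
    add_zero, sum_const_zero, sum_add_distrib]
  rw [Equiv.sum_comp τ (fun a => if j < j.succAbove a then 1 else 0), ← card_filter,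
    card_filter_lt_succAbove]

lemma mem_shuffles_one_iff {p : Equiv.Perm (Fin (n + 1))} :
    p ∈ shuffles n 1 ↔ StrictMono (fun a : Fin n => p a.castSucc) := by
  rw [shuffles, mem_filter, and_iff_right (mem_univ p), and_iff_left fun a b hab => ?_]
  · rfl
  · exact absurd hab (by rw [Subsingleton.elim a b]; exact lt_irrefl b)

lemma permSnoc_one_mem_shuffles (j : Fin (n + 1)) : permSnoc j 1 ∈ shuffles n 1 :=
  mem_shuffles_one_iff.2 fun a b hab => by simpa using hab

lemma eq_permSnoc_of_mem_shuffles {p : Equiv.Perm (Fin (n + 1))} (hp : p ∈ shuffles n 1) :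
    p = permSnoc (p (Fin.last n)) 1 := by
  have hrange : Set.range (fun a : Fin n => p a.castSucc) = {p (Fin.last n)}ᶜ := by
    rw [Set.range_comp' p Fin.castSucc, ← Fin.succAbove_last, Fin.range_succAbove,
      Set.image_compl_eq p.bijective, Set.image_singleton]
  have hsucc : (fun a : Fin n => p a.castSucc) = (p (Fin.last n)).succAbove :=
    ((mem_shuffles_one_iff.1 hp).range_inj (Fin.strictMono_succAbove _)).1
      (hrange.trans (Fin.range_succAbove _).symm)
  refine Equiv.ext fun x => ?_
  induction x using Fin.lastCases with
  | last => simp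
  | cast a => simpa using congrFun hsucc a

lemma sum_shuffles_one {M : Type*} [AddCommMonoid M] (f : Equiv.Perm (Fin (n + 1)) → M) :
    ∑ p ∈ shuffles n 1, f p = ∑ j, f (permSnoc j 1) :=
  sum_nbij' (fun p => p (Fin.last n)) (fun j => permSnoc j 1) (fun _ _ => mem_univ _)
    (fun j _ => permSnoc_one_mem_shuffles j) (fun _ hp => (eq_permSnoc_of_mem_shuffles hp).symm)
    (fun j _ => permSnoc_last j 1) (fun _ hp => congrArg f (eq_permSnoc_of_mem_shuffles hp))

end Permutations

lemma itWedge_succ_apply (q : ℝ) (n : ℕ) (V : Fin (n + 1) → (Fin 1 → ℕ) → ℂ)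
    (i : Fin (n + 1) → ℕ) :
    itWedge q (n + 1) V i = ∑ j : Fin (n + 1), (-q⁻¹ : ℂ) ^ (n - j : ℕ)
      * itWedge q n (fun a => V a.castSucc) (fun a => i (j.succAbove a))
      * V (Fin.last n) (fun _ => i j) := by
  rw [itWedge, wedgeQ, sum_shuffles_one]
  refine sum_congr rfl fun j _ => ?_
  have hlast (a : Fin 1) : Fin.natAdd n a = Fin.last n := by
    rw [Subsingleton.elim a 0]; rfl
  have hcast (a : Fin n) : permSnoc j 1 (Fin.castAdd 1 a) = j.succAbove a :=
    permSnoc_castSucc j 1 a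
  simp only [invNum_permSnoc, invNum_one, zero_add, hlast, hcast, permSnoc_last]

theorem itWedge_eq_qdet_general (q : ℝ) (n : ℕ) (V : Fin n → ((Fin 1 → ℕ) → ℂ)) (i : Fin n → ℕ) :
    itWedge q n V i
      = ∑ p : Equiv.Perm (Fin n),
          ((-q⁻¹ : ℂ) ^ invNum n p) * ∏ a : Fin n, V a (fun _ => i (p a)) := by
  induction n with
  | zero => simp [itWedge, invNum_one]
  | succ n ih =>
    rw [itWedge_succ_apply, sum_perm_succ]
    refine sum_congr rfl fun j _ => ?_
    rw [ih, mul_sum, sum_mul]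
    refine sum_congr rfl fun τ _ => ?_
    rw [invNum_permSnoc, pow_add, Fin.prod_univ_castSucc]
    simp only [permSnoc_castSucc, permSnoc_last]
    ring

theorem itWedge_eq_qdet (q : ℝ) (hq0 : 0 < q) (hq1 : q < 1) (ℓ n : ℕ)
    (hn : 1 ≤ n) (hnℓ : n ≤ ℓ) (V : Fin n → ((Fin 1 → ℕ) → ℂ))
    (i : Fin n → ℕ) (hmono : StrictMono i) (hbd : ∀ a, 1 ≤ i a ∧ i a ≤ ℓ) :
    itWedge q n V i
      = ∑ p : Equiv.Perm (Fin n),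
          ((-q⁻¹ : ℂ) ^ invNum n p) * ∏ a : Fin n, V a (fun _ => i (p a)) :=
  itWedge_eq_qdet_general q n V i
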